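/- Let n ∈ ℕ, h ∈ ℕ with h ≥ 1, let P ∈ ℝ^{n×n} be a positive semidefinite symmetric matrix with operator norm ‖P‖, let μ₁, μ₂ > 0, κ, λ ∈ (0,1), η, β, δ ≥ 0 with η < β, and set γ = (1 + 1/μ₁ + 1/μ₂)·‖P‖ and assume γ·δ ≤ (1−λ)·β. Let X, X_a, X_b ⊆ ℝⁿ, and let J, Y : ℝⁿ × ℝⁿ → ℝ^{n×n} be closed-loop matrices. Assume: (i) xᵀPx ≤ η/(1 + κ(λ−λ^{h+1})/(1−λ)) for all x ∈ X_a; (ii) xᵀPx ≥ β for all x ∈ X_b; (iii) for all x, x_h ∈ X, the 2n×2n symmetric block matrix with blocks (1+μ₁)·J(x,x_h)ᵀPJ(x,x_h) + λ(κ−1)P, J(x,x_h)ᵀPY(x,x_h), Y(x,x_h)ᵀPJ(x,x_h), and (1+μ₂)·Y(x,x_h)ᵀPY(x,x_h) − κλ^{h+1}P is negative semidefinite. Let y : ℤ → ℝⁿ be any trajectory with y(k) ∈ X for all k ≥ −h, initial history y(0), y(−1), …, y(−h) ∈ X_a, and y(k+1) = J(y(k), y(k−h))·y(k) + Y(y(k),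 y(k−h))·y(k−h) + w(k) for all k ≥ 0 with ‖w(k)‖² ≤ δ. Then for every k ≥ 0, it is not the case that y(k) ∈ X_b while y(k−1), …, y(k−h) ∈ X \ X_b; in particular y(k) ∉ X_b for all k ≥ −h. -/

import Mathlib

open Matrix
open scoped Matrix.Norms.L2Operator

/-!
Along a trajectory put `q k = y kᵀ P y k` and let `V k = q k + κ ∑_{i=1}^h λⁱ q (k - i)` be the
Krasovskii functional. Expanding `q (k + 1)` through the dynamics, Young's inequality with weights
`μ₁`, `μ₂` absorbs the cross terms with the disturbance, and the block condition (iii) turns what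
is left into `q (k + 1) ≤ λ (1 - κ) q k + κ λ^(h+1) q (k - h) + γ δ`. The sum in `V` telescopes, so
this is exactly `V (k + 1) ≤ λ V k + γ δ`. By (i) the initial history gives `V 0 ≤ η < β`, and
`γ δ ≤ (1 - λ) β` makes `{V < β}` invariant. Since `q ≤ V`, condition (ii) keeps the state out of
`X_b` at every time.
-/

namespace Matrix

variable {ι : Type*} {P : Matrix ι ι ℝ}

lemma PosSemidef.isSymm (hP : P.PosSemidef) : P.IsSymm :=
  isHermitian_iff_isSymm.mp hP.isHermitian

variable [Fintype ι]

lemma PosSemidef.dotProduct_mulVec_self_nonneg (hP : P.PosSemidef) (x : ι → ℝ) :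
    0 ≤ x ⬝ᵥ (P *ᵥ x) := by
  simpa using hP.dotProduct_mulVec_nonneg x

lemma IsSymm.dotProduct_mulVec_comm (hP : P.IsSymm) (a b : ι → ℝ) :
    a ⬝ᵥ (P *ᵥ b) = b ⬝ᵥ (P *ᵥ a) := by
  simpa [hP.eq] using dotProduct_transpose_mulVec P a b

lemma IsSymm.dotProduct_mulVec_add_add (hP : P.IsSymm) (a b c : ι → ℝ) :
    (a + b + c) ⬝ᵥ (P *ᵥ (a + b + c)) =
      a ⬝ᵥ (P *ᵥ a) + b ⬝ᵥ (P *ᵥ b) + c ⬝ᵥ (P *ᵥ c)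
        + 2 * (a ⬝ᵥ (P *ᵥ b)) + 2 * (a ⬝ᵥ (P *ᵥ c)) + 2 * (b ⬝ᵥ (P *ᵥ c)) := by
  simp only [mulVec_add, dotProduct_add, add_dotProduct, hP.dotProduct_mulVec_comm b a,
    hP.dotProduct_mulVec_comm c a, hP.dotProduct_mulVec_comm c b]
  ring

lemma PosSemidef.two_mul_dotProduct_mulVec_le (hP : P.PosSemidef) {μ : ℝ} (hμ : 0 < μ)
    (a b : ι → ℝ) :
    2 * (a ⬝ᵥ (P *ᵥ b)) ≤ μ * (a ⬝ᵥ (P *ᵥ a)) + μ⁻¹ * (b ⬝ᵥ (P *ᵥ b)) := by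
  have hsq : 0 ≤ (μ • a - b) ⬝ᵥ (P *ᵥ (μ • a - b)) := hP.dotProduct_mulVec_self_nonneg _
  simp only [mulVec_sub, mulVec_smul, dotProduct_sub, sub_dotProduct, smul_dotProduct,
    dotProduct_smul, smul_eq_mul, hP.isSymm.dotProduct_mulVec_comm b a] at hsq
  rw [← mul_le_mul_iff_of_pos_left hμ, mul_add, ← mul_assoc, mul_inv_cancel_left₀ hμ.ne']
  nlinarith

lemma dotProduct_mulVec_le_l2_opNorm_mul_sq [DecidableEq ι] (x : ι → ℝ) :
    x ⬝ᵥ (P *ᵥ x) ≤ ‖P‖ * ‖(WithLp.equiv 2 (ι → ℝ)).symm x‖ ^ 2 := by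
  set x' : EuclideanSpace ℝ ι := (WithLp.equiv 2 (ι → ℝ)).symm x
  have hinner : x ⬝ᵥ (P *ᵥ x) = inner ℝ x' ((EuclideanSpace.equiv ι ℝ).symm (P *ᵥ x)) := by
    rw [EuclideanSpace.inner_eq_star_dotProduct, dotProduct_comm]
    rfl
  calc x ⬝ᵥ (P *ᵥ x) ≤ ‖x'‖ * ‖(EuclideanSpace.equiv ι ℝ).symm (P *ᵥ x)‖ :=
        hinner ▸ real_inner_le_norm _ _
    _ ≤ ‖x'‖ * (‖P‖ * ‖x'‖) := by gcongr; exact P.l2_opNorm_mulVec x'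
    _ = ‖P‖ * ‖x'‖ ^ 2 := by ring

lemma dotProduct_fromBlocks_mulVec_nonpos {κ : Type*} [Fintype κ] {A : Matrix ι ι ℝ}
    {B : Matrix ι κ ℝ} {C : Matrix κ ι ℝ} {D : Matrix κ κ ℝ}
    (hM : (-fromBlocks A B C D).PosSemidef) (x : ι → ℝ) (z : κ → ℝ) :
    x ⬝ᵥ (A *ᵥ x) + x ⬝ᵥ (B *ᵥ z) + z ⬝ᵥ (C *ᵥ x) + z ⬝ᵥ (D *ᵥ z) ≤ 0 := by
  have h := hM.dotProduct_mulVec_self_nonneg (Sum.elim x z)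
  simp only [neg_mulVec, dotProduct_neg, fromBlocks_mulVec, sumElim_dotProduct_sumElim,
    dotProduct_add, Sum.elim_comp_inl, Sum.elim_comp_inr] at h
  linarith

lemma dotProduct_transpose_mul_mul_mulVec (M N : Matrix ι ι ℝ) (v u : ι → ℝ) :
    v ⬝ᵥ ((Mᵀ * P * N) *ᵥ u) = (M *ᵥ v) ⬝ᵥ (P *ᵥ (N *ᵥ u)) := by
  rw [Matrix.mul_assoc, ← mulVec_mulVec, dotProduct_mulVec v, vecMul_transpose, ← mulVec_mulVec]

theorem PosSemidef.dotProduct_mulVec_add_add_le [DecidableEq ι] (hP : P.PosSemidef)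
    {μ₁ μ₂ c d : ℝ} (hμ₁ : 0 < μ₁) (hμ₂ : 0 < μ₂) {A B : Matrix ι ι ℝ}
    (hM : (-fromBlocks ((1 + μ₁) • (Aᵀ * P * A) + c • P) (Aᵀ * P * B) (Bᵀ * P * A)
      ((1 + μ₂) • (Bᵀ * P * B) - d • P)).PosSemidef)
    (x z w : ι → ℝ) :
    (A *ᵥ x + B *ᵥ z + w) ⬝ᵥ (P *ᵥ (A *ᵥ x + B *ᵥ z + w)) ≤
      -c * (x ⬝ᵥ (P *ᵥ x)) + d * (z ⬝ᵥ (P *ᵥ z))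
        + (1 + 1 / μ₁ + 1 / μ₂) * ‖P‖ * ‖(WithLp.equiv 2 (ι → ℝ)).symm w‖ ^ 2 := by
  have hblock := dotProduct_fromBlocks_mulVec_nonpos hM x z
  simp only [add_mulVec, sub_mulVec, smul_mulVec, dotProduct_add, dotProduct_sub,
    dotProduct_smul, smul_eq_mul, dotProduct_transpose_mul_mul_mulVec,
    hP.isSymm.dotProduct_mulVec_comm (B *ᵥ z) (A *ᵥ x)] at hblock
  have hyoung₁ := hP.two_mul_dotProduct_mulVec_le hμ₁ (A *ᵥ x) w
  have hyoung₂ := hP.two_mul_dotProduct_mulVec_le hμ₂ (B *ᵥ z) w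
  have hw : (1 + 1 / μ₁ + 1 / μ₂) * (w ⬝ᵥ (P *ᵥ w)) ≤
      (1 + 1 / μ₁ + 1 / μ₂) * (‖P‖ * ‖(WithLp.equiv 2 (ι → ℝ)).symm w‖ ^ 2) := by
    gcongr
    exact dotProduct_mulVec_le_l2_opNorm_mul_sq w
  rw [hP.isSymm.dotProduct_mulVec_add_add]
  simp only [one_div] at hw ⊢
  linarith

end Matrix

/-- With `q k = y kᵀ P y k` this is `B (y k, y (k - 1), …, y (k - h))`; the summand of index `i`
is the paper's term `λ^(i+1) q (k - (i+1))`. -/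
def krasovskii (κ lam : ℝ) (h : ℕ) (q : ℤ → ℝ) (k : ℤ) : ℝ :=
  q k + κ * ∑ i ∈ Finset.range h, lam ^ (i + 1) * q (k - 1 - i)

section Krasovskii

variable {κ lam : ℝ} {h : ℕ} {q : ℤ → ℝ}

lemma sum_range_pow_succ_mul_add (lam : ℝ) (h : ℕ) (q : ℤ → ℝ) (k : ℤ) :
    ∑ i ∈ Finset.range h, lam ^ (i + 1) * q (k - i) + lam ^ (h + 1) * q (k - h) =
      lam * q k + lam * ∑ i ∈ Finset.range h, lam ^ (i + 1) * q (k - 1 - i) := by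
  rw [← Finset.sum_range_succ (fun i => lam ^ (i + 1) * q (k - i)), Finset.sum_range_succ',
    Finset.mul_sum, add_comm]
  congr 1
  · simp
  · exact Finset.sum_congr rfl fun i _ => by push_cast; rw [sub_add_eq_sub_sub_swap]; ring

lemma krasovskii_succ_le {e : ℝ} {k : ℤ}
    (hq : q (k + 1) ≤ lam * (1 - κ) * q k + κ * lam ^ (h + 1) * q (k - h) + e) :
    krasovskii κ lam h q (k + 1) ≤ lam * krasovskii κ lam h q k + e := by
  have htel := sum_range_pow_succ_mul_add lam h q k
  simp only [krasovskii, add_sub_cancel_right]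
  linear_combination hq + κ * htel

lemma le_krasovskii (hκ : 0 ≤ κ) (hlam : 0 ≤ lam) (hq : ∀ j, 0 ≤ q j) (k : ℤ) :
    q k ≤ krasovskii κ lam h q k :=
  le_add_of_nonneg_right <| mul_nonneg hκ <| Finset.sum_nonneg fun _ _ =>
    mul_nonneg (pow_nonneg hlam _) (hq _)

lemma sum_range_pow_succ {K : Type*} [Field K] {x : K} (hx : x ≠ 1) (h : ℕ) :
    ∑ i ∈ Finset.range h, x ^ (i + 1) = (x - x ^ (h + 1)) / (1 - x) := by
  have hgeom := geom_sum_Ico' hx (by omega : 1 ≤ h + 1)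
  rw [pow_one, Finset.sum_Ico_eq_sum_range] at hgeom
  simpa [add_comm] using hgeom

lemma one_le_one_add_mul_geom (hκ : 0 ≤ κ) (hlam0 : 0 ≤ lam) (hlam1 : lam < 1) :
    1 ≤ 1 + κ * ((lam - lam ^ (h + 1)) / (1 - lam)) := by
  rw [← sum_range_pow_succ hlam1.ne]
  exact le_add_of_nonneg_right <| mul_nonneg hκ <| Finset.sum_nonneg fun _ _ => by positivity

lemma krasovskii_zero_le (hκ : 0 ≤ κ) (hlam0 : 0 ≤ lam) (hlam1 : lam < 1) {η : ℝ}
    (hq : ∀ i : ℕ, i ≤ h → q (-i) ≤ η / (1 + κ * ((lam - lam ^ (h + 1)) / (1 - lam)))) :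
    krasovskii κ lam h q 0 ≤ η := by
  set D := 1 + κ * ((lam - lam ^ (h + 1)) / (1 - lam))
  have hD : 1 ≤ D := one_le_one_add_mul_geom hκ hlam0 hlam1
  have hpast : ∀ i ∈ Finset.range h, lam ^ (i + 1) * q (0 - 1 - i) ≤ lam ^ (i + 1) * (η / D) :=
    fun i hi => by
      have hi' := Finset.mem_range.mp hi
      have hidx : (0 : ℤ) - 1 - i = -((i + 1 : ℕ) : ℤ) := by push_cast; ring
      rw [hidx]
      exact mul_le_mul_of_nonneg_left (hq (i + 1) hi') (pow_nonneg hlam0 _)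
  calc krasovskii κ lam h q 0
      ≤ η / D + κ * ∑ i ∈ Finset.range h, lam ^ (i + 1) * (η / D) :=
        add_le_add (by simpa using hq 0 (Nat.zero_le h))
          (mul_le_mul_of_nonneg_left (Finset.sum_le_sum hpast) hκ)
    _ = η / D * D := by rw [← Finset.sum_mul, sum_range_pow_succ hlam1.ne]; ring
    _ = η := div_mul_cancel₀ η (by linarith)

end Krasovskii

lemma forall_lt_of_le_mul_add {v : ℕ → ℝ} {lam e β : ℝ} (hlam : 0 < lam)
    (he : e ≤ (1 - lam) * β) (h0 : v 0 < β) (hv : ∀ k, v (k + 1) ≤ lam * v k + e) :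
    ∀ k, v k < β
  | 0 => h0
  | k + 1 => by
    have := mul_lt_mul_of_pos_left (forall_lt_of_le_mul_add hlam he h0 hv k) hlam
    linarith [hv k]

theorem stmt15_general
    (n h : ℕ)
    (P : Matrix (Fin n) (Fin n) ℝ) (hP : P.PosSemidef)
    (μ₁ μ₂ κ lam η β δ : ℝ)
    (hμ₁ : 0 < μ₁) (hμ₂ : 0 < μ₂)
    (hκ0 : 0 < κ) (hlam0 : 0 < lam) (hlam1 : lam < 1)
    (hη : 0 ≤ η) (hηβ : η < β)
    (γ : ℝ) (hγ : γ = (1 + 1 / μ₁ + 1 / μ₂) * ‖P‖)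
    (hγδ : γ * δ ≤ (1 - lam) * β)
    (X Xa Xb : Set (Fin n → ℝ))
    (J Y : (Fin n → ℝ) → (Fin n → ℝ) → Matrix (Fin n) (Fin n) ℝ)
    (hinitlevel : ∀ x ∈ Xa,
      x ⬝ᵥ (P *ᵥ x) ≤ η / (1 + κ * ((lam - lam ^ (h + 1)) / (1 - lam))))
    (hunsafelevel : ∀ x ∈ Xb, β ≤ x ⬝ᵥ (P *ᵥ x))
    (hblock : ∀ x ∈ X, ∀ xh ∈ X,
      (-(fromBlocks
        ((1 + μ₁) • ((J x xh)ᵀ * P * J x xh) + (lam * (κ - 1)) • P)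
        ((J x xh)ᵀ * P * Y x xh)
        ((Y x xh)ᵀ * P * J x xh)
        ((1 + μ₂) • ((Y x xh)ᵀ * P * Y x xh) - (κ * lam ^ (h + 1)) • P))).PosSemidef)
    (y : ℤ → (Fin n → ℝ)) (w : ℤ → (Fin n → ℝ))
    (hyX : ∀ k : ℤ, -(h : ℤ) ≤ k → y k ∈ X)
    (hinit : ∀ i : ℕ, i ≤ h → y (-(i : ℤ)) ∈ Xa)
    (hdyn : ∀ k : ℤ, 0 ≤ k →
      y (k + 1) = J (y k) (y (k - (h : ℤ))) *ᵥ y k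
        + Y (y k) (y (k - (h : ℤ))) *ᵥ y (k - (h : ℤ)) + w k)
    (hw : ∀ k : ℤ, 0 ≤ k → ‖(WithLp.equiv 2 (Fin n → ℝ)).symm (w k)‖ ^ 2 ≤ δ) :
    (∀ k : ℤ, 0 ≤ k →
      ¬ (y k ∈ Xb ∧ ∀ i : ℕ, 1 ≤ i → i ≤ h → y (k - (i : ℤ)) ∈ X \ Xb)) ∧
    (∀ k : ℤ, -(h : ℤ) ≤ k → y k ∉ Xb) := by
  set q : ℤ → ℝ := fun k => y k ⬝ᵥ (P *ᵥ y k)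
  have hγ0 : 0 ≤ γ := hγ ▸ by positivity
  have hstep (k : ℤ) (hk : 0 ≤ k) :
      q (k + 1) ≤ lam * (1 - κ) * q k + κ * lam ^ (h + 1) * q (k - h) + γ * δ := by
    have hx := hyX k (by omega)
    have hxh := hyX (k - h) (by omega)
    have hbound :=
      hP.dotProduct_mulVec_add_add_le hμ₁ hμ₂ (hblock _ hx _ hxh) (y k) (y (k - h)) (w k)
    rw [← hdyn k hk, ← hγ] at hbound
    linarith [mul_le_mul_of_nonneg_left (hw k hk) hγ0]
  have hV0 : krasovskii κ lam h q 0 < β :=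
    (krasovskii_zero_le hκ0.le hlam0.le hlam1 fun i hi => hinitlevel _ (hinit i hi)).trans_lt hηβ
  have hV : ∀ k : ℕ, krasovskii κ lam h q k < β :=
    forall_lt_of_le_mul_add hlam0 hγδ hV0 fun k => by
      exact_mod_cast krasovskii_succ_le (hstep k k.cast_nonneg)
  have hsafe (k : ℤ) (hk : -(h : ℤ) ≤ k) : q k < β := by
    rcases le_or_gt 0 k with hk0 | hk0
    · lift k to ℕ using hk0
      have hq0 (j : ℤ) : 0 ≤ q j := hP.dotProduct_mulVec_self_nonneg _
      exact (le_krasovskii hκ0.le hlam0.le hq0 k).trans_lt (hV k)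
    · obtain ⟨i, hi, rfl⟩ : ∃ i : ℕ, i ≤ h ∧ k = -i := ⟨(-k).toNat, by omega, by omega⟩
      exact ((hinitlevel _ (hinit i hi)).trans
        (div_le_self hη (one_le_one_add_mul_geom hκ0.le hlam0.le hlam1))).trans_lt hηβ
  have hnot_mem (k : ℤ) (hk : -(h : ℤ) ≤ k) : y k ∉ Xb :=
    fun hb => (hunsafelevel _ hb).not_gt (hsafe k hk)
  exact ⟨fun k hk hb => hnot_mem k (by omega) hb.1, hnot_mem⟩

/-- **Data-driven robust safety of the closed-loop delayed system.**
Under the level-set conditions (i), (ii) on `P`, the block negative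
semidefiniteness condition (iii) on the closed-loop matrices `J`, `Y`, and the
dissipation inequality `γδ ≤ (1-λ)β` with `γ = (1 + 1/μ₁ + 1/μ₂)‖P‖`, every
trajectory of `y(k+1) = J(y k, y(k-h))y(k) + Y(y k, y(k-h))y(k-h) + w(k)` with
`‖w(k)‖² ≤ δ`, values in `X`, and initial history in `X_a`, never has a state
history in `X_b × (X \ X_b)^h`; in particular `y(k) ∉ X_b` for all `k ≥ -h`. -/
theorem stmt15
    (n h : ℕ) (hh : 1 ≤ h)
    (P : Matrix (Fin n) (Fin n) ℝ) (hP : P.PosSemidef)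
    (μ₁ μ₂ κ lam η β δ : ℝ)
    (hμ₁ : 0 < μ₁) (hμ₂ : 0 < μ₂)
    (hκ0 : 0 < κ) (hκ1 : κ < 1) (hlam0 : 0 < lam) (hlam1 : lam < 1)
    (hη : 0 ≤ η) (hβ : 0 ≤ β) (hδ : 0 ≤ δ) (hηβ : η < β)
    (γ : ℝ) (hγ : γ = (1 + 1 / μ₁ + 1 / μ₂) * ‖P‖)
    (hγδ : γ * δ ≤ (1 - lam) * β)
    (X Xa Xb : Set (Fin n → ℝ))
    (J Y : (Fin n → ℝ) → (Fin n → ℝ) → Matrix (Fin n) (Fin n) ℝ)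
    (hinitlevel : ∀ x ∈ Xa,
      x ⬝ᵥ (P *ᵥ x) ≤ η / (1 + κ * ((lam - lam ^ (h + 1)) / (1 - lam))))
    (hunsafelevel : ∀ x ∈ Xb, β ≤ x ⬝ᵥ (P *ᵥ x))
    (hblock : ∀ x ∈ X, ∀ xh ∈ X,
      (-(fromBlocks
        ((1 + μ₁) • ((J x xh)ᵀ * P * J x xh) + (lam * (κ - 1)) • P)
        ((J x xh)ᵀ * P * Y x xh)
        ((Y x xh)ᵀ * P * J x xh)
        ((1 + μ₂) • ((Y x xh)ᵀ * P * Y x xh) - (κ * lam ^ (h + 1)) • P))).PosSemidef)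
    (y : ℤ → (Fin n → ℝ)) (w : ℤ → (Fin n → ℝ))
    (hyX : ∀ k : ℤ, -(h : ℤ) ≤ k → y k ∈ X)
    (hinit : ∀ i : ℕ, i ≤ h → y (-(i : ℤ)) ∈ Xa)
    (hdyn : ∀ k : ℤ, 0 ≤ k →
      y (k + 1) = J (y k) (y (k - (h : ℤ))) *ᵥ y k
        + Y (y k) (y (k - (h : ℤ))) *ᵥ y (k - (h : ℤ)) + w k)
    (hw : ∀ k : ℤ, 0 ≤ k → ‖(WithLp.equiv 2 (Fin n → ℝ)).symm (w k)‖ ^ 2 ≤ δ) :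
    (∀ k : ℤ, 0 ≤ k →
      ¬ (y k ∈ Xb ∧ ∀ i : ℕ, 1 ≤ i → i ≤ h → y (k - (i : ℤ)) ∈ X \ Xb)) ∧
    (∀ k : ℤ, -(h : ℤ) ≤ k → y k ∉ Xb) :=
  stmt15_general n h P hP μ₁ μ₂ κ lam η β δ hμ₁ hμ₂ hκ0 hlam0 hlam1 hη hηβ γ hγ hγδ X Xa Xb J Y
    hinitlevel hunsafelevel hblock y w hyX hinit hdyn hw
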